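/- Let A ∈ ℝ^{n×n}, B ∈ ℝ^{n×m}, N ≥ 1, and for 0 ≤ t ≤ N let Q_t ∈ ℝ^{n×n} be symmetric positive definite, θ_t ∈ ℝ^n, and for 0 ≤ t ≤ N−1 let R_t ∈ ℝ^{m×m} be symmetric positive definite. Define backward: P_N = Q_N, β_N = θ_N; and for t = N−1 down to 0: M_t = P_{t+1} − P_{t+1}B(R_t + BᵀP_{t+1}B)^{−1}BᵀP_{t+1}, P_t = Q_t + AᵀM_tA, β_t = P_t^{−1}(Q_tθ_t + AᵀM_tβ_{t+1}), H_t = M_t − M_tA·P_t^{−1}·AᵀM_t, K_t = (R_t + BᵀP_{t+1}B)^{−1}BᵀP_{t+1}A, K'_t = (R_t + BᵀP_{t+1}B)^{−1}BᵀP_{t+1}. Define value functions backward by V_N(x) = (1/2)(x − θ_N)ᵀQ_N(x − θ_N) and V_t(x) = inf_{u ∈ ℝ^m} [(1/2)(x − θ_t)ᵀQ_t(x − θ_t) + (1/2)uᵀR_t u + V_{t+1}(Ax + Bu)]. Then each P_t is symmetric positive definite (so the recursion is well defined), the infimum defining V_t(x) is attained at u*_t = −K_t x + K'_t β_{t+1},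 and for all 0 ≤ t ≤ N and all x ∈ ℝ^n, V_t(x) = (1/2)(x − β_t)ᵀP_t(x − β_t) + (1/2)Σ_{k=t}^{N−1}(Aθ_k − β_{k+1})ᵀH_k(Aθ_k − β_{k+1}). -/

import Mathlib

/-! The argument is one completing-the-square identity: for symmetric `Q`, `M` with
`P = Q + AᵀMA` invertible and `c = P⁻¹(Qa + AᵀMb)`,
`(x-a)ᵀQ(x-a) + (Ax-b)ᵀM(Ax-b) = (x-c)ᵀP(x-c) + (Aa-b)ᵀ(M - MAP⁻¹AᵀM)(Aa-b)`.
Applied in the control (to `R_t`, `P_{t+1}`, `B`) it writes the Bellman cost as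
`(u-u*)ᵀ(R_t + BᵀP_{t+1}B)(u-u*)` plus `(Ax-β_{t+1})ᵀM_t(Ax-β_{t+1})`, so `u*` is optimal;
applied in the state (to `Q_t`, `M_t`, `A`) it turns the second term into `(x-β_t)ᵀP_t(x-β_t)`
plus the constant with `H_t`. Evaluated at its centre, the identity shows that `M - MAP⁻¹AᵀM`
is positive semidefinite, which keeps every `P_t` positive definite along the backward
induction. -/

open Matrix

section QuadraticForms

variable {𝕜 ι κ : Type*} [CommRing 𝕜] [Fintype ι] [Fintype κ]

theorem Matrix.IsSymm.dotProduct_mulVec_comm {S : Matrix ι ι 𝕜} (hS : S.IsSymm) (x y : ι → 𝕜) :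
    x ⬝ᵥ S *ᵥ y = y ⬝ᵥ S *ᵥ x := by
  simpa only [hS.eq] using dotProduct_transpose_mulVec S x y

theorem Matrix.IsSymm.dotProduct_mulVec_add_add {S : Matrix ι ι 𝕜} (hS : S.IsSymm) (x y : ι → 𝕜) :
    (x + y) ⬝ᵥ S *ᵥ (x + y) = x ⬝ᵥ S *ᵥ x + 2 * (x ⬝ᵥ S *ᵥ y) + y ⬝ᵥ S *ᵥ y := by
  simp only [mulVec_add, dotProduct_add, add_dotProduct, hS.dotProduct_mulVec_comm y x]
  ring

theorem mulVec_dotProduct (A : Matrix κ ι 𝕜) (x : ι → 𝕜) (y : κ → 𝕜) :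
    (A *ᵥ x) ⬝ᵥ y = x ⬝ᵥ Aᵀ *ᵥ y := by
  rw [dotProduct_transpose_mulVec, dotProduct_comm]

theorem mulVec_dotProduct_mulVec_mulVec (A : Matrix κ ι 𝕜) (M : Matrix κ κ 𝕜) (x y : ι → 𝕜) :
    (A *ᵥ x) ⬝ᵥ M *ᵥ (A *ᵥ y) = x ⬝ᵥ (Aᵀ * M * A) *ᵥ y := by
  rw [mulVec_dotProduct, ← mulVec_mulVec, ← mulVec_mulVec]

variable {Q P : Matrix ι ι 𝕜} {M : Matrix κ κ 𝕜} {A : Matrix κ ι 𝕜}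

theorem sum_quadForms_eq_of_stationary (hQ : Q.IsSymm) (hM : M.IsSymm) (hP : P = Q + Aᵀ * M * A)
    {a c : ι → 𝕜} {b : κ → 𝕜} (hc : P *ᵥ c = Q *ᵥ a + Aᵀ *ᵥ (M *ᵥ b)) (x : ι → 𝕜) :
    (x - a) ⬝ᵥ Q *ᵥ (x - a) + (A *ᵥ x - b) ⬝ᵥ M *ᵥ (A *ᵥ x - b) =
      (x - c) ⬝ᵥ P *ᵥ (x - c) +
        ((c - a) ⬝ᵥ Q *ᵥ (c - a) + (A *ᵥ c - b) ⬝ᵥ M *ᵥ (A *ᵥ c - b)) := by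
  have hgrad : Q *ᵥ (c - a) + Aᵀ *ᵥ (M *ᵥ (A *ᵥ c - b)) = 0 := by
    rw [← sub_eq_zero.mpr hc, hP]
    simp only [mulVec_sub, add_mulVec, ← mulVec_mulVec]
    abel
  have hcross : (x - c) ⬝ᵥ Q *ᵥ (c - a) + (A *ᵥ (x - c)) ⬝ᵥ M *ᵥ (A *ᵥ c - b) = 0 := by
    rw [mulVec_dotProduct, ← dotProduct_add, hgrad, dotProduct_zero]
  have hsplit : (x - c) ⬝ᵥ P *ᵥ (x - c) =
      (x - c) ⬝ᵥ Q *ᵥ (x - c) + (A *ᵥ (x - c)) ⬝ᵥ M *ᵥ (A *ᵥ (x - c)) := by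
    rw [mulVec_dotProduct_mulVec_mulVec, ← dotProduct_add, ← add_mulVec, hP]
  rw [show x - a = (x - c) + (c - a) by abel, show A *ᵥ x - b = A *ᵥ (x - c) + (A *ᵥ c - b) by
    rw [mulVec_sub]; abel, hQ.dotProduct_mulVec_add_add, hM.dotProduct_mulVec_add_add, hsplit]
  linear_combination 2 * hcross

theorem sum_quadForms_eq_completeSquare [DecidableEq ι] (hQ : Q.IsSymm) (hM : M.IsSymm)
    (hP : P = Q + Aᵀ * M * A) (hPu : IsUnit P.det) (a x : ι → 𝕜) (b : κ → 𝕜) :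
    (x - a) ⬝ᵥ Q *ᵥ (x - a) + (A *ᵥ x - b) ⬝ᵥ M *ᵥ (A *ᵥ x - b) =
      (x - P⁻¹ *ᵥ (Q *ᵥ a + Aᵀ *ᵥ (M *ᵥ b))) ⬝ᵥ P *ᵥ (x - P⁻¹ *ᵥ (Q *ᵥ a + Aᵀ *ᵥ (M *ᵥ b))) +
        (A *ᵥ a - b) ⬝ᵥ (M - M * A * P⁻¹ * Aᵀ * M) *ᵥ (A *ᵥ a - b) := by
  set c := P⁻¹ *ᵥ (Q *ᵥ a + Aᵀ *ᵥ (M *ᵥ b))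
  set w := Aᵀ *ᵥ (M *ᵥ (A *ᵥ a - b))
  have hc : P *ᵥ c = Q *ᵥ a + Aᵀ *ᵥ (M *ᵥ b) := by
    rw [mulVec_mulVec, mul_nonsing_inv _ hPu, one_mulVec]
  have hPac : P *ᵥ (a - c) = w := by
    rw [mulVec_sub, hc, hP]
    simp only [w, add_mulVec, mulVec_sub, ← mulVec_mulVec]
    abel
  have hac : (a - c) ⬝ᵥ P *ᵥ (a - c) = w ⬝ᵥ P⁻¹ *ᵥ w := by
    rw [hPac, ← hPac, mulVec_mulVec, nonsing_inv_mul _ hPu, one_mulVec, dotProduct_comm]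
  have hH : (A *ᵥ a - b) ⬝ᵥ (M - M * A * P⁻¹ * Aᵀ * M) *ᵥ (A *ᵥ a - b) =
      (A *ᵥ a - b) ⬝ᵥ M *ᵥ (A *ᵥ a - b) - w ⬝ᵥ P⁻¹ *ᵥ w := by
    have hMA : ∀ y, (A *ᵥ a - b) ⬝ᵥ M *ᵥ (A *ᵥ y) = y ⬝ᵥ w := fun y => by
      rw [hM.dotProduct_mulVec_comm, mulVec_dotProduct]
    rw [sub_mulVec, dotProduct_sub, ← mulVec_mulVec, ← mulVec_mulVec, ← mulVec_mulVec,
      ← mulVec_mulVec, hMA, dotProduct_comm _ w]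
  have ha := sum_quadForms_eq_of_stationary hQ hM hP hc a
  rw [sub_self, zero_dotProduct, zero_add] at ha
  linear_combination sum_quadForms_eq_of_stationary hQ hM hP hc x - ha - hac - hH

theorem Matrix.IsSymm.sub_mul_mul_inv_mul_mul [DecidableEq ι] (hM : M.IsSymm) (hP : P.IsSymm)
    (A : Matrix κ ι 𝕜) : (M - M * A * P⁻¹ * Aᵀ * M).IsSymm := by
  simp only [IsSymm, transpose_sub, transpose_mul, transpose_transpose, hM.eq, hP.inv.eq,
    Matrix.mul_assoc]

end QuadraticForms

section RealQuadraticForms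

variable {ι κ : Type*} [Fintype ι] [Fintype κ]

omit [Fintype ι] in
theorem Matrix.PosSemidef.isSymm {S : Matrix ι ι ℝ} (hS : S.PosSemidef) : S.IsSymm :=
  isHermitian_iff_isSymm.mp hS.isHermitian

theorem Matrix.PosSemidef.dotProduct_mulVec_nonneg' {S : Matrix ι ι ℝ} (hS : S.PosSemidef)
    (x : ι → ℝ) : 0 ≤ x ⬝ᵥ S *ᵥ x := by
  simpa using hS.dotProduct_mulVec_nonneg x

theorem Matrix.PosDef.add_transpose_mul_mul {Q : Matrix ι ι ℝ} {M : Matrix κ κ ℝ} (hQ : Q.PosDef)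
    (hM : M.PosSemidef) (A : Matrix κ ι ℝ) : (Q + Aᵀ * M * A).PosDef := by
  simpa using hQ.add_posSemidef (hM.conjTranspose_mul_mul_same A)

theorem Matrix.PosSemidef.sub_mul_mul_inv_mul_mul [DecidableEq ι] {Q P : Matrix ι ι ℝ}
    {M : Matrix κ κ ℝ} {A : Matrix κ ι ℝ} (hQ : Q.PosDef) (hM : M.PosSemidef)
    (hP : P = Q + Aᵀ * M * A) :
    (M - M * A * P⁻¹ * Aᵀ * M).PosSemidef := by
  have hPd : P.PosDef := hP ▸ hQ.add_transpose_mul_mul hM A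
  refine .of_dotProduct_mulVec_nonneg ?_ fun z => ?_
  · exact isHermitian_iff_isSymm.mpr (hM.isSymm.sub_mul_mul_inv_mul_mul hPd.posSemidef.isSymm A)
  have h := sum_quadForms_eq_completeSquare hQ.posSemidef.isSymm hM.isSymm hP
    hPd.det_pos.ne'.isUnit 0 (P⁻¹ *ᵥ (Q *ᵥ 0 + Aᵀ *ᵥ (M *ᵥ -z))) (-z)
  simp only [sub_self, zero_dotProduct, zero_add, mulVec_zero, zero_sub, neg_neg] at h
  rw [star_trivial, ← h]
  exact add_nonneg (hQ.posSemidef.dotProduct_mulVec_nonneg' _) (hM.dotProduct_mulVec_nonneg' _)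

end RealQuadraticForms

theorem ciInf_eq_of_forall_apply_le {ι α : Type*} [ConditionallyCompleteLattice α] {f : ι → α}
    {i₀ : ι} (h : ∀ i, f i₀ ≤ f i) : ⨅ i, f i = f i₀ :=
  have : Nonempty ι := ⟨i₀⟩
  le_antisymm (ciInf_le ⟨f i₀, by rintro _ ⟨i, rfl⟩; exact h i⟩ i₀) (le_ciInf h)

section Bellman

variable {ι κ : Type*} [Fintype ι] [Fintype κ] [DecidableEq ι] [DecidableEq κ]

theorem bellman_step {Q P' M P H A : Matrix ι ι ℝ} {R : Matrix κ κ ℝ} {B : Matrix ι κ ℝ}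
    {K K' : Matrix κ ι ℝ} {θ β β' : ι → ℝ} {V' : (ι → ℝ) → ℝ} {c : ℝ}
    (hQ : Q.PosDef) (hR : R.PosDef) (hP' : P'.PosSemidef)
    (hM : M = P' - P' * B * (R + Bᵀ * P' * B)⁻¹ * Bᵀ * P') (hP : P = Q + Aᵀ * M * A)
    (hβ : β = P⁻¹ *ᵥ (Q *ᵥ θ + Aᵀ *ᵥ (M *ᵥ β'))) (hH : H = M - M * A * P⁻¹ * Aᵀ * M)
    (hK : K = (R + Bᵀ * P' * B)⁻¹ * Bᵀ * P' * A) (hK' : K' = (R + Bᵀ * P' * B)⁻¹ * Bᵀ * P')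
    (hV' : ∀ y, V' y = 1 / 2 * ((y - β') ⬝ᵥ P' *ᵥ (y - β')) + c) :
    P.PosDef ∧ ∀ x,
      (∀ u, 1 / 2 * ((x - θ) ⬝ᵥ Q *ᵥ (x - θ)) +
          1 / 2 * ((-(K *ᵥ x) + K' *ᵥ β') ⬝ᵥ R *ᵥ (-(K *ᵥ x) + K' *ᵥ β')) +
          V' (A *ᵥ x + B *ᵥ (-(K *ᵥ x) + K' *ᵥ β')) ≤
        1 / 2 * ((x - θ) ⬝ᵥ Q *ᵥ (x - θ)) + 1 / 2 * (u ⬝ᵥ R *ᵥ u) + V' (A *ᵥ x + B *ᵥ u)) ∧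
      1 / 2 * ((x - θ) ⬝ᵥ Q *ᵥ (x - θ)) +
          1 / 2 * ((-(K *ᵥ x) + K' *ᵥ β') ⬝ᵥ R *ᵥ (-(K *ᵥ x) + K' *ᵥ β')) +
          V' (A *ᵥ x + B *ᵥ (-(K *ᵥ x) + K' *ᵥ β')) =
        1 / 2 * ((x - β) ⬝ᵥ P *ᵥ (x - β)) +
          (1 / 2 * ((A *ᵥ θ - β') ⬝ᵥ H *ᵥ (A *ᵥ θ - β')) + c) := by
  set S := R + Bᵀ * P' * B
  have hS : S.PosDef := hR.add_transpose_mul_mul hP' B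
  have hMpsd : M.PosSemidef := hM ▸ .sub_mul_mul_inv_mul_mul hR hP' rfl
  have hPd : P.PosDef := hP ▸ hQ.add_transpose_mul_mul hMpsd A
  have hcost : ∀ x u, (x - θ) ⬝ᵥ Q *ᵥ (x - θ) + u ⬝ᵥ R *ᵥ u +
      (A *ᵥ x + B *ᵥ u - β') ⬝ᵥ P' *ᵥ (A *ᵥ x + B *ᵥ u - β') =
      (u - (-(K *ᵥ x) + K' *ᵥ β')) ⬝ᵥ S *ᵥ (u - (-(K *ᵥ x) + K' *ᵥ β')) +
        ((x - β) ⬝ᵥ P *ᵥ (x - β) + (A *ᵥ θ - β') ⬝ᵥ H *ᵥ (A *ᵥ θ - β')) := by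
    intro x u
    have hu := sum_quadForms_eq_completeSquare hR.posSemidef.isSymm hP'.isSymm rfl
      hS.det_pos.ne'.isUnit 0 u (β' - A *ᵥ x)
    have hx := sum_quadForms_eq_completeSquare hQ.posSemidef.isSymm hMpsd.isSymm hP
      hPd.det_pos.ne'.isUnit θ x β'
    have hopt : S⁻¹ *ᵥ (R *ᵥ 0 + Bᵀ *ᵥ (P' *ᵥ (β' - A *ᵥ x))) = -(K *ᵥ x) + K' *ᵥ β' := by
      simp only [hK, hK', mulVec_zero, zero_add, mulVec_sub, ← mulVec_mulVec]
      abel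
    rw [hopt, ← hM, mulVec_zero, zero_sub, neg_sub, sub_zero,
      show B *ᵥ u - (β' - A *ᵥ x) = A *ᵥ x + B *ᵥ u - β' by abel] at hu
    rw [← hβ, ← hH] at hx
    linear_combination hu + hx
  refine ⟨hPd, fun x => ?_⟩
  have hopt := hcost x (-(K *ᵥ x) + K' *ᵥ β')
  rw [sub_self, zero_dotProduct, zero_add] at hopt
  refine ⟨fun u => ?_, ?_⟩
  · rw [hV', hV']
    linarith [hcost x u, hS.posSemidef.dotProduct_mulVec_nonneg' (u - (-(K *ᵥ x) + K' *ᵥ β'))]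
  · rw [hV']
    linear_combination hopt / 2

end Bellman

theorem stmt_10_general {n m : ℕ} (A : Matrix (Fin n) (Fin n) ℝ) (B : Matrix (Fin n) (Fin m) ℝ)
    (N : ℕ)
    (Q : ℕ → Matrix (Fin n) (Fin n) ℝ) (θ : ℕ → Fin n → ℝ)
    (R : ℕ → Matrix (Fin m) (Fin m) ℝ)
    (hQ : ∀ t ≤ N, (Q t).PosDef)
    (hR : ∀ t < N, (R t).PosDef)
    (P M H : ℕ → Matrix (Fin n) (Fin n) ℝ)
    (β : ℕ → Fin n → ℝ)
    (K K' : ℕ → Matrix (Fin m) (Fin n) ℝ)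
    (hPN : P N = Q N) (hβN : β N = θ N)
    (hM : ∀ t < N, M t =
      P (t + 1) - P (t + 1) * B * (R t + Bᵀ * P (t + 1) * B)⁻¹ * Bᵀ * P (t + 1))
    (hP : ∀ t < N, P t = Q t + Aᵀ * M t * A)
    (hβ : ∀ t < N, β t =
      (P t)⁻¹.mulVec ((Q t).mulVec (θ t) + Aᵀ.mulVec ((M t).mulVec (β (t + 1)))))
    (hH : ∀ t < N, H t = M t - M t * A * (P t)⁻¹ * Aᵀ * M t)
    (hK : ∀ t < N, K t = (R t + Bᵀ * P (t + 1) * B)⁻¹ * Bᵀ * P (t + 1) * A)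
    (hK' : ∀ t < N, K' t = (R t + Bᵀ * P (t + 1) * B)⁻¹ * Bᵀ * P (t + 1))
    (V : ℕ → (Fin n → ℝ) → ℝ)
    (hVN : ∀ x : Fin n → ℝ,
      V N x = (1 / 2) * ((x - θ N) ⬝ᵥ (Q N).mulVec (x - θ N)))
    (hVt : ∀ t < N, ∀ x : Fin n → ℝ, V t x = ⨅ u : Fin m → ℝ,
      (1 / 2) * ((x - θ t) ⬝ᵥ (Q t).mulVec (x - θ t)) +
        (1 / 2) * (u ⬝ᵥ (R t).mulVec u) + V (t + 1) (A.mulVec x + B.mulVec u)) :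
    (∀ t ≤ N, (P t).PosDef) ∧
    (∀ t < N, ∀ x : Fin n → ℝ, ∀ u : Fin m → ℝ,
      (1 / 2) * ((x - θ t) ⬝ᵥ (Q t).mulVec (x - θ t)) +
          (1 / 2) * ((-(K t).mulVec x + (K' t).mulVec (β (t + 1))) ⬝ᵥ
            (R t).mulVec (-(K t).mulVec x + (K' t).mulVec (β (t + 1)))) +
          V (t + 1) (A.mulVec x + B.mulVec (-(K t).mulVec x + (K' t).mulVec (β (t + 1))))
        ≤ (1 / 2) * ((x - θ t) ⬝ᵥ (Q t).mulVec (x - θ t)) +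
            (1 / 2) * (u ⬝ᵥ (R t).mulVec u) + V (t + 1) (A.mulVec x + B.mulVec u)) ∧
    (∀ t < N, ∀ x : Fin n → ℝ,
      V t x = (1 / 2) * ((x - θ t) ⬝ᵥ (Q t).mulVec (x - θ t)) +
          (1 / 2) * ((-(K t).mulVec x + (K' t).mulVec (β (t + 1))) ⬝ᵥ
            (R t).mulVec (-(K t).mulVec x + (K' t).mulVec (β (t + 1)))) +
          V (t + 1)
            (A.mulVec x + B.mulVec (-(K t).mulVec x + (K' t).mulVec (β (t + 1))))) ∧
    (∀ t ≤ N, ∀ x : Fin n → ℝ,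
      V t x = (1 / 2) * ((x - β t) ⬝ᵥ (P t).mulVec (x - β t)) +
        (1 / 2) * ∑ k ∈ Finset.Ico t N,
          ((A.mulVec (θ k) - β (k + 1)) ⬝ᵥ (H k).mulVec (A.mulVec (θ k) - β (k + 1)))) := by
  have hV : ∀ t ≤ N, (P t).PosDef ∧ ∀ x : Fin n → ℝ,
      V t x = (1 / 2) * ((x - β t) ⬝ᵥ (P t).mulVec (x - β t)) +
        (1 / 2) * ∑ k ∈ Finset.Ico t N,
          ((A.mulVec (θ k) - β (k + 1)) ⬝ᵥ (H k).mulVec (A.mulVec (θ k) - β (k + 1))) := by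
    intro t ht
    induction ht using Nat.decreasingInduction with
    | self => exact ⟨hPN ▸ hQ N le_rfl, fun x => by simp [hVN, hPN, hβN]⟩
    | of_succ t ht ih =>
      obtain ⟨hPt, hopt⟩ := bellman_step (hQ t ht.le) (hR t ht) ih.1.posSemidef (hM t ht)
        (hP t ht) (hβ t ht) (hH t ht) (hK t ht) (hK' t ht) ih.2
      refine ⟨hPt, fun x => ?_⟩
      rw [hVt t ht, ciInf_eq_of_forall_apply_le (hopt x).1, (hopt x).2,
        Finset.sum_eq_sum_Ico_succ_bot ht]
      ring
  have hopt := fun t (ht : t < N) => (bellman_step (hQ t ht.le) (hR t ht)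
    (hV (t + 1) ht).1.posSemidef (hM t ht) (hP t ht) (hβ t ht) (hH t ht) (hK t ht) (hK' t ht)
    (hV (t + 1) ht).2).2
  refine ⟨fun t ht => (hV t ht).1, fun t ht x => (hopt t ht x).1, fun t ht x => ?_,
    fun t ht => (hV t ht).2⟩
  rw [hVt t ht, ciInf_eq_of_forall_apply_le (hopt t ht x).1]

/-- Theorem 4 (dynamic programming for finite-horizon time-varying LQ tracking): with the
backward Riccati recursion `P_t, M_t, β_t, H_t, K_t, K'_t`, each `P_t` is positive
definite, the infimum in the Bellman recursion for the value function `V_t` is attained at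
`u*_t = −K_t x + K'_t β_{t+1}`, and
`V_t(x) = ½(x−β_t)ᵀP_t(x−β_t) + ½ ∑_{k=t}^{N−1}(Aθ_k−β_{k+1})ᵀH_k(Aθ_k−β_{k+1})`. -/
theorem stmt_10 {n m : ℕ} (A : Matrix (Fin n) (Fin n) ℝ) (B : Matrix (Fin n) (Fin m) ℝ)
    (N : ℕ) (hN : 1 ≤ N)
    (Q : ℕ → Matrix (Fin n) (Fin n) ℝ) (θ : ℕ → Fin n → ℝ)
    (R : ℕ → Matrix (Fin m) (Fin m) ℝ)
    (hQ : ∀ t ≤ N, (Q t).PosDef)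
    (hR : ∀ t < N, (R t).PosDef)
    (P M H : ℕ → Matrix (Fin n) (Fin n) ℝ)
    (β : ℕ → Fin n → ℝ)
    (K K' : ℕ → Matrix (Fin m) (Fin n) ℝ)
    (hPN : P N = Q N) (hβN : β N = θ N)
    (hM : ∀ t < N, M t =
      P (t + 1) - P (t + 1) * B * (R t + Bᵀ * P (t + 1) * B)⁻¹ * Bᵀ * P (t + 1))
    (hP : ∀ t < N, P t = Q t + Aᵀ * M t * A)
    (hβ : ∀ t < N, β t =
      (P t)⁻¹.mulVec ((Q t).mulVec (θ t) + Aᵀ.mulVec ((M t).mulVec (β (t + 1)))))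
    (hH : ∀ t < N, H t = M t - M t * A * (P t)⁻¹ * Aᵀ * M t)
    (hK : ∀ t < N, K t = (R t + Bᵀ * P (t + 1) * B)⁻¹ * Bᵀ * P (t + 1) * A)
    (hK' : ∀ t < N, K' t = (R t + Bᵀ * P (t + 1) * B)⁻¹ * Bᵀ * P (t + 1))
    (V : ℕ → (Fin n → ℝ) → ℝ)
    (hVN : ∀ x : Fin n → ℝ,
      V N x = (1 / 2) * ((x - θ N) ⬝ᵥ (Q N).mulVec (x - θ N)))
    (hVt : ∀ t < N, ∀ x : Fin n → ℝ, V t x = ⨅ u : Fin m → ℝ,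
      (1 / 2) * ((x - θ t) ⬝ᵥ (Q t).mulVec (x - θ t)) +
        (1 / 2) * (u ⬝ᵥ (R t).mulVec u) + V (t + 1) (A.mulVec x + B.mulVec u)) :
    (∀ t ≤ N, (P t).PosDef) ∧
    (∀ t < N, ∀ x : Fin n → ℝ, ∀ u : Fin m → ℝ,
      (1 / 2) * ((x - θ t) ⬝ᵥ (Q t).mulVec (x - θ t)) +
          (1 / 2) * ((-(K t).mulVec x + (K' t).mulVec (β (t + 1))) ⬝ᵥ
            (R t).mulVec (-(K t).mulVec x + (K' t).mulVec (β (t + 1)))) +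
          V (t + 1) (A.mulVec x + B.mulVec (-(K t).mulVec x + (K' t).mulVec (β (t + 1))))
        ≤ (1 / 2) * ((x - θ t) ⬝ᵥ (Q t).mulVec (x - θ t)) +
            (1 / 2) * (u ⬝ᵥ (R t).mulVec u) + V (t + 1) (A.mulVec x + B.mulVec u)) ∧
    (∀ t < N, ∀ x : Fin n → ℝ,
      V t x = (1 / 2) * ((x - θ t) ⬝ᵥ (Q t).mulVec (x - θ t)) +
          (1 / 2) * ((-(K t).mulVec x + (K' t).mulVec (β (t + 1))) ⬝ᵥ
            (R t).mulVec (-(K t).mulVec x + (K' t).mulVec (β (t + 1)))) +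
          V (t + 1)
            (A.mulVec x + B.mulVec (-(K t).mulVec x + (K' t).mulVec (β (t + 1))))) ∧
    (∀ t ≤ N, ∀ x : Fin n → ℝ,
      V t x = (1 / 2) * ((x - β t) ⬝ᵥ (P t).mulVec (x - β t)) +
        (1 / 2) * ∑ k ∈ Finset.Ico t N,
          ((A.mulVec (θ k) - β (k + 1)) ⬝ᵥ (H k).mulVec (A.mulVec (θ k) - β (k + 1)))) :=
  stmt_10_general A B N Q θ R hQ hR P M H β K K' hPN hβN hM hP hβ hH hK hK' V hVN hVt
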